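/- Let Y be a square matrix over ℤ satisfying (Y - I)^3 = 0 and Y ≡ I (mod 2). Then for every integer m ≥ 2, Y^m ≡ I (mod 2m). -/

import Mathlib

/-! Write `Y = 1 + 2 • M`. Since `(Y - 1)³ = 0`, the binomial expansion of `Y ^ m` stops after
the quadratic term, so `Y ^ m - 1 = 2m • M + 4 (m choose 2) • M² = 2m • (M + (m - 1) • M²)`. -/

theorem one_add_pow_eq_of_pow_three_eq_zero {R : Type*} [Semiring R] {N : R} (hN : N ^ 3 = 0)
    (p : ℕ) : (1 + N) ^ p = 1 + p • N + p.choose 2 • N ^ 2 := by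
  induction p with
  | zero => simp
  | succ p ih =>
    calc (1 + N) ^ (p + 1) = (1 + p • N + p.choose 2 • N ^ 2) * (1 + N) := by rw [pow_succ, ih]
      _ = 1 + (p + 1) • N + (p + p.choose 2) • N ^ 2 + p.choose 2 • N ^ 3 := by
        simp only [mul_add, add_mul, one_mul, mul_one, smul_mul_assoc, ← pow_succ, add_smul,
          one_smul, ← pow_two]
        abel
      _ = 1 + (p + 1) • N + (p + 1).choose 2 • N ^ 2 := by
        rw [hN, smul_zero, add_zero, Nat.choose_succ_succ', Nat.choose_one_right]

theorem Matrix.exists_eq_smul_of_forall_dvd {m n R : Type*} [Semigroup R] {k : R}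
    {A : Matrix m n R} (hA : ∀ i j, k ∣ A i j) : ∃ B : Matrix m n R, A = k • B := by
  choose B hB using hA
  exact ⟨Matrix.of B, Matrix.ext hB⟩

theorem Nat.choose_two_mul_two_sq (m : ℕ) : m.choose 2 * 2 ^ 2 = 2 * m * (m - 1) := by
  rw [sq, ← mul_assoc, Nat.choose_two_right,
    Nat.div_mul_cancel (Nat.even_mul_pred_self m).two_dvd]
  ring

theorem one_add_two_smul_pow_sub_one {R : Type*} [Ring R] {M : R} (hM : (2 • M) ^ 3 = 0)
    (m : ℕ) : (1 + 2 • M) ^ m - 1 = (2 * m) • (M + (m - 1) • M ^ 2) := by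
  rw [one_add_pow_eq_of_pow_three_eq_zero hM, add_assoc, add_sub_cancel_left, smul_pow, smul_add]
  simp only [smul_smul]
  rw [mul_comm m 2, Nat.choose_two_mul_two_sq]

theorem pow_congr_one_mod_two_mul_of_two_le_general {n : ℕ} (Y : Matrix (Fin n) (Fin n) ℤ)
    (hcube : (Y - 1) ^ 3 = 0) (hmod2 : ∀ i j, (2 : ℤ) ∣ (Y - 1) i j)
    (m : ℕ) :
    ∀ i j, ((2 * m : ℕ) : ℤ) ∣ (Y ^ m - 1) i j := by
  obtain ⟨M, hM⟩ := Matrix.exists_eq_smul_of_forall_dvd hmod2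
  rw [ofNat_smul_eq_nsmul ℤ 2 M] at hM
  obtain rfl : Y = 1 + 2 • M := by rw [← hM, add_sub_cancel]
  rw [add_sub_cancel_left] at hcube
  intro i j
  rw [one_add_two_smul_pow_sub_one hcube, Matrix.smul_apply, nsmul_eq_mul]
  exact dvd_mul_right _ _

/-- Let `Y` be a square integer matrix with `(Y - I)^3 = 0` and `Y ≡ I (mod 2)`
(entrywise). Then for every integer `m ≥ 2`, `Y^m ≡ I (mod 2m)` entrywise. -/
theorem pow_congr_one_mod_two_mul_of_two_le {n : ℕ} (Y : Matrix (Fin n) (Fin n) ℤ)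
    (hcube : (Y - 1) ^ 3 = 0) (hmod2 : ∀ i j, (2 : ℤ) ∣ (Y - 1) i j)
    (m : ℕ) (hm : 2 ≤ m) :
    ∀ i j, ((2 * m : ℕ) : ℤ) ∣ (Y ^ m - 1) i j :=
  pow_congr_one_mod_two_mul_of_two_le_general Y hcube hmod2 m
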